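/- arXiv:1907.01766 — 6 statements merged into one kernel-verified Lean document; each statement's English description precedes it below -/
import Mathlib

section
/- If an allocation z of divisible chores is Pareto optimal and its consumption graph contains a simple cycle C = (i_1, j_1, i_2, j_2, ..., i_L, j_L, i_1) (meaning z_{i_k, j_k} > 0 and z_{i_{k+1}, j_k} > 0 for all k), then the product of disutility ratios along the cycle equals 1: ∏_{k=1}^{L} |v_{i_k, j_k}| / |v_{i_{k+1}, j_k}| = 1 (indices mod L). -/
open Finset

def feasible {n m : ℕ} (z : Fin n → Fin m → ℝ) : Prop :=
  (∀ i j, 0 ≤ z i j) ∧ ∀ j, ∑ i, z i j = 1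

def util {n m : ℕ} (v : Fin n → Fin m → ℝ) (i : Fin n) (x : Fin m → ℝ) : ℝ :=
  ∑ j, v i j * x j

def paretoOptimal {n m : ℕ} (v : Fin n → Fin m → ℝ) (z : Fin n → Fin m → ℝ) : Prop :=
  ¬ ∃ z', feasible z' ∧ (∀ i, util v i (z i) ≤ util v i (z' i)) ∧
    ∃ i, util v i (z i) < util v i (z' i)

def competitive {n m : ℕ} (v : Fin n → Fin m → ℝ) (b : Fin n → ℝ)
    (z : Fin n → Fin m → ℝ) (p : Fin m → ℝ) : Prop :=
  feasible z ∧ (∀ j, p j < 0) ∧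
    ∀ i (x : Fin m → ℝ), (∀ j, 0 ≤ x j) → (∑ j, p j * x j ≤ b i) →
      util v i x ≤ util v i (z i)

def nextIdx {L : ℕ} (k : Fin L) : Fin L := ⟨(k.1 + 1) % L, Nat.mod_lt _ k.pos⟩

def MWWedge {n m : ℕ} (v : Fin n → Fin m → ℝ) (τ : Fin n → ℝ) (i : Fin n) (j : Fin m) : Prop :=
  ∀ i', τ i * |v i j| ≤ τ i' * |v i' j|

def isMWW {n m : ℕ} (v : Fin n → Fin m → ℝ) (G : Fin n → Fin m → Prop) : Prop :=
  ∃ τ : Fin n → ℝ, (∀ i, 0 < τ i) ∧ ∀ i j, G i j ↔ MWWedge v τ i j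

open Fin.NatCast

private lemma modSuccInj {L x y : ℕ} (hx : x < L) (hy : y < L)
    (h : (x+1) % L = (y+1) % L) : x = y := by
  rcases Nat.lt_or_ge (x+1) L with h1 | h1 <;> rcases Nat.lt_or_ge (y+1) L with h2 | h2
  · rw [Nat.mod_eq_of_lt h1, Nat.mod_eq_of_lt h2] at h; omega
  · have hy1 : y + 1 = L := by omega
    rw [Nat.mod_eq_of_lt h1, hy1, Nat.mod_self] at h; omega
  · have hx1 : x + 1 = L := by omega
    rw [hx1, Nat.mod_self, Nat.mod_eq_of_lt h2] at h; omega
  · omega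

private lemma nextIdx_inj {L : ℕ} : Function.Injective (nextIdx (L := L)) := by
  intro k k' h
  have h2 := congrArg Fin.val h
  simp only [nextIdx] at h2
  exact Fin.ext (modSuccInj k.isLt k'.isLt h2)

private lemma nextIdx_surj {L : ℕ} : Function.Surjective (nextIdx (L := L)) :=
  Finite.injective_iff_surjective.mp nextIdx_inj

private lemma nextIdx_natCast {L : ℕ} [NeZero L] (k : Fin L) :
    nextIdx k = ((k.1 + 1 : ℕ) : Fin L) := by
  apply Fin.ext
  rw [Fin.val_natCast]
  rfl

private lemma cancel_aux (v1 v2 e t : ℝ) (h1 : v1 ≠ 0) :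
    v1 * -(e * (t * (-v2 / -v1))) + v2 * (e * t) = 0 := by
  field_simp
  ring

private lemma nextIdx_ne {L : ℕ} (hL : 2 ≤ L) (k : Fin L) : nextIdx k ≠ k := by
  intro h
  have h2 := congrArg Fin.val h
  simp only [nextIdx] at h2
  rcases Nat.lt_or_ge (k.1+1) L with h1 | h1
  · rw [Nat.mod_eq_of_lt h1] at h2; omega
  · have hx1 : k.1 + 1 = L := by have := k.isLt; omega
    rw [hx1, Nat.mod_self] at h2
    have := k.isLt; omega

theorem stmt0 {n m L : ℕ} (v z : Fin n → Fin m → ℝ)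
    (hv : ∀ i j, v i j < 0) (hz : feasible z) (hpo : paretoOptimal v z)
    (hL : 2 ≤ L) (a : Fin L → Fin n) (c : Fin L → Fin m)
    (ha : Function.Injective a) (hc : Function.Injective c)
    (h1 : ∀ k, 0 < z (a k) (c k)) (h2 : ∀ k, 0 < z (a (nextIdx k)) (c k)) :
    ∏ k, |v (a k) (c k)| / |v (a (nextIdx k)) (c k)| = 1 := by
  haveI : NeZero L := ⟨by omega⟩
  by_contra hP
  have habs : ∀ (i : Fin n) (j : Fin m), 0 < |v i j| := fun i j => abs_pos.2 (hv i j).ne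
  have hcast : ∀ k : Fin L, ((k.1 : ℕ) : Fin L) = k := fun k => Fin.cast_val_eq_self k
  -- basic quantities
  set NN : ℕ → ℝ := fun t => |v (a ↑t) (c ↑t)| with hNN
  set DD : ℕ → ℝ := fun t => |v (a ↑(t+1)) (c ↑t)| with hDD
  set w : ℕ → ℝ := fun s => DD s / NN (s+1) with hw
  set A : ℕ → ℝ := fun t => ∏ s ∈ Finset.range t, w s with hA
  have hNpos : ∀ t, 0 < NN t := fun t => habs _ _
  have hDpos : ∀ t, 0 < DD t := fun t => habs _ _
  have hApos : ∀ t, 0 < A t := fun t => Finset.prod_pos fun s _ => div_pos (hDpos s) (hNpos (s+1))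
  set P : ℝ := ∏ k, |v (a k) (c k)| / |v (a (nextIdx k)) (c k)| with hPdef
  -- rewrite P as a range product
  have hPf : P = ∏ t ∈ Finset.range L, (NN t / DD t) := by
    rw [hPdef, ← Fin.prod_univ_eq_prod_range (fun t => NN t / DD t) L]
    apply Finset.prod_congr rfl
    intro k _
    simp only [hNN, hDD]
    rw [hcast k, ← nextIdx_natCast k]
  have hsplit1 : ∀ f : ℕ → ℝ, ∏ t ∈ Finset.range L, f t
      = (∏ t ∈ Finset.range (L-1), f (t+1)) * f 0 := by
    intro f
    obtain ⟨L', rfl⟩ : ∃ L', L = L' + 1 := ⟨L-1, by omega⟩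
    simp [Finset.prod_range_succ']
  have hsplit2 : ∀ f : ℕ → ℝ, ∏ t ∈ Finset.range L, f t
      = (∏ t ∈ Finset.range (L-1), f t) * f (L-1) := by
    intro f
    obtain ⟨L', rfl⟩ : ∃ L', L = L' + 1 := ⟨L-1, by omega⟩
    simp [Finset.prod_range_succ]
  have hDDlast : DD (L-1) = |v (a 0) (c ↑(L-1))| := by
    have hLL : ((L-1+1 : ℕ) : Fin L) = (0 : Fin L) := by
      rw [show L-1+1 = L from by omega]
      exact Fin.natCast_self L
    simp only [hDD]
    rw [hLL]
  -- key identity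
  have hne1 : (∏ t ∈ Finset.range (L-1), NN (t+1)) ≠ 0 :=
    (Finset.prod_pos fun t _ => hNpos _).ne'
  have hne2 : (∏ t ∈ Finset.range (L-1), DD t) ≠ 0 :=
    (Finset.prod_pos fun t _ => hDpos _).ne'
  have key : NN 0 = P * (DD (L-1) * A (L-1)) := by
    rw [hPf, Finset.prod_div_distrib, hsplit1 NN, hsplit2 DD]
    have hAval : A (L-1) = (∏ t ∈ Finset.range (L-1), DD t) / (∏ t ∈ Finset.range (L-1), NN (t+1)) := by
      rw [hA]
      simp only [hw]
      rw [Finset.prod_div_distrib]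
    rw [hAval]
    field_simp
    rw [eq_div_iff (hDpos _).ne']
  set Δ : ℝ := NN 0 - DD (L-1) * A (L-1) with hΔ
  have hDApos : 0 < DD (L-1) * A (L-1) := mul_pos (hDpos _) (hApos _)
  have hΔne : Δ ≠ 0 := by
    intro h0
    apply hP
    have : P * (DD (L-1) * A (L-1)) = 1 * (DD (L-1) * A (L-1)) := by
      rw [← key]; linarith [hΔ ▸ h0]
    exact mul_right_cancel₀ hDApos.ne' this
  -- step sizes
  have hUnivNe : (Finset.univ : Finset (Fin L)).Nonempty := ⟨⟨0, by omega⟩, Finset.mem_univ _⟩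
  set M : ℝ := Finset.inf' Finset.univ hUnivNe
      (fun k => min (z (a k) (c k)) (z (a (nextIdx k)) (c k)) / A k.1) with hM
  have hMpos : 0 < M := by
    rw [hM, Finset.lt_inf'_iff]
    intro k _
    exact div_pos (lt_min (h1 k) (h2 k)) (hApos k.1)
  set ε : ℝ := (if (0:ℝ) < Δ then (1:ℝ) else -1) * M with hε
  have hεΔ : 0 < ε * Δ := by
    rcases hΔne.lt_or_gt with hneg | hpos
    · rw [hε, if_neg (by linarith)]; nlinarith
    · rw [hε, if_pos hpos]; nlinarith
  have hεabs : |ε| = M := by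
    rw [hε]
    split_ifs <;> rw [abs_mul] <;> norm_num [abs_of_pos hMpos]
  set x : Fin L → ℝ := fun k => ε * A k.1 with hx
  have hxbound : ∀ k, |x k| ≤ min (z (a k) (c k)) (z (a (nextIdx k)) (c k)) := by
    intro k
    have hle : M ≤ min (z (a k) (c k)) (z (a (nextIdx k)) (c k)) / A k.1 :=
      Finset.inf'_le _ (Finset.mem_univ k)
    have hxk : |x k| = M * A k.1 := by
      rw [hx]
      simp only
      rw [abs_mul, hεabs, abs_of_pos (hApos _)]
    rw [hxk]
    calc M * A k.1 ≤ (min (z (a k) (c k)) (z (a (nextIdx k)) (c k)) / A k.1) * A k.1 :=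
          mul_le_mul_of_nonneg_right hle (hApos k.1).le
      _ = _ := div_mul_cancel₀ _ (hApos k.1).ne'
  -- the perturbation
  set d : Fin n → Fin m → ℝ := fun i j =>
    ∑ k, ((if i = a k ∧ j = c k then -x k else 0)
        + (if i = a (nextIdx k) ∧ j = c k then x k else 0)) with hd
  set z' : Fin n → Fin m → ℝ := fun i j => z i j + d i j with hz'
  -- column sums of d vanish
  have hdcol : ∀ j, ∑ i, d i j = 0 := by
    intro j
    simp only [hd]
    rw [Finset.sum_comm]
    apply Finset.sum_eq_zero
    intro k _
    rw [Finset.sum_add_distrib]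
    have hgen : ∀ (i0 : Fin n) (r : ℝ),
        ∑ i : Fin n, (if i = i0 ∧ j = c k then r else 0) = if j = c k then r else 0 := by
      intro i0 r
      simp [ite_and, Finset.sum_ite_eq']
    rw [hgen, hgen]
    split_ifs <;> ring
  -- nonnegativity of z'
  have hz'nonneg : ∀ i j, 0 ≤ z' i j := by
    intro i j
    simp only [hz', hd]
    by_cases hj : ∃ k0, j = c k0
    · obtain ⟨k0, rfl⟩ := hj
      rw [Finset.sum_eq_single k0]
      · have hane : a k0 ≠ a (nextIdx k0) := fun h => nextIdx_ne hL k0 (ha h).symm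
        have hb := hxbound k0
        have hb1 : x k0 ≤ z (a k0) (c k0) :=
          le_trans (le_abs_self _) (le_trans hb (min_le_left _ _))
        have hb2 : -x k0 ≤ z (a (nextIdx k0)) (c k0) :=
          le_trans (neg_le_abs _) (le_trans hb (min_le_right _ _))
        by_cases hi1 : i = a k0
        · rw [if_pos ⟨hi1, rfl⟩, if_neg (fun h => hane (hi1 ▸ h.1))]
          subst hi1; linarith
        · by_cases hi2 : i = a (nextIdx k0)
          · rw [if_neg (fun h => hi1 h.1), if_pos ⟨hi2, rfl⟩]
            subst hi2; linarith
          · rw [if_neg (fun h => hi1 h.1), if_neg (fun h => hi2 h.1)]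
            have := hz.1 i (c k0); linarith
      · intro k _ hk
        have hck : c k0 ≠ c k := fun h => hk (hc h).symm
        rw [if_neg (fun h => hck h.2), if_neg (fun h => hck h.2)]
        ring
      · intro h; exact absurd (Finset.mem_univ k0) h
    · push_neg at hj
      rw [Finset.sum_eq_zero]
      · have := hz.1 i j; linarith
      · intro k _
        rw [if_neg (fun h => hj k h.2), if_neg (fun h => hj k h.2)]
        ring
  -- feasibility of z'
  have hz'feas : feasible z' := by
    refine ⟨hz'nonneg, fun j => ?_⟩
    simp only [hz']
    rw [Finset.sum_add_distrib, hz.2 j, hdcol j]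
    ring
  -- utility change
  set Dfun : Fin n → ℝ := fun i =>
    ∑ k, ((if i = a k then v i (c k) * (-x k) else 0)
        + (if i = a (nextIdx k) then v i (c k) * x k else 0)) with hDfun
  have hutil : ∀ i, util v i (z' i) = util v i (z i) + Dfun i := by
    intro i
    simp only [util, hz', hDfun]
    have hstep : ∀ j, v i j * (z i j + d i j) = v i j * z i j + v i j * d i j :=
      fun j => by ring
    rw [Finset.sum_congr rfl (fun j _ => hstep j), Finset.sum_add_distrib]
    congr 1
    have hsum1 : ∀ (i0 : Fin n) (j0 : Fin m) (r : ℝ),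
        ∑ j : Fin m, (if i = i0 ∧ j = j0 then v i j * r else 0)
          = if i = i0 then v i j0 * r else 0 := by
      intro i0 j0 r
      by_cases hi : i = i0 <;> simp [hi]
    simp only [hd, Finset.mul_sum, mul_add, mul_ite, mul_zero]
    rw [Finset.sum_comm]
    apply Finset.sum_congr rfl
    intro k _
    rw [Finset.sum_add_distrib, hsum1 (a k) (c k) (-x k), hsum1 (a (nextIdx k)) (c k) (x k)]
  -- value of Dfun at agents on the cycle
  have hD_next : ∀ k0 : Fin L, Dfun (a (nextIdx k0))
      = v (a (nextIdx k0)) (c (nextIdx k0)) * (-x (nextIdx k0))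
        + v (a (nextIdx k0)) (c k0) * x k0 := by
    intro k0
    simp only [hDfun]
    rw [Finset.sum_add_distrib]
    congr 1
    · rw [Finset.sum_eq_single (nextIdx k0)]
      · rw [if_pos rfl]
      · intro k _ hk
        rw [if_neg (fun h => hk (ha h).symm)]
      · intro h; exact absurd (Finset.mem_univ _) h
    · rw [Finset.sum_eq_single k0]
      · rw [if_pos rfl]
      · intro k _ hk
        rw [if_neg (fun h => hk (nextIdx_inj (ha h)).symm)]
      · intro h; exact absurd (Finset.mem_univ _) h
  have hD_notin : ∀ i, (∀ k, i ≠ a k) → Dfun i = 0 := by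
    intro i hi
    simp only [hDfun]
    apply Finset.sum_eq_zero
    intro k _
    rw [if_neg (hi k), if_neg (hi (nextIdx k))]
    ring
  -- telescoping : interior steps give zero utility change
  have hg0 : ∀ k0 : Fin L, k0.1 + 1 < L → Dfun (a (nextIdx k0)) = 0 := by
    intro k0 hk0
    rw [hD_next k0]
    have hxv : x (nextIdx k0) = ε * (A k0.1 * w k0.1) := by
      simp only [hx]
      rw [nextIdx_natCast k0, Fin.val_natCast, Nat.mod_eq_of_lt hk0]
      rw [hA]
      simp only
      rw [Finset.prod_range_succ]
    have hxk : x k0 = ε * A k0.1 := rfl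
    have hck : c k0 = c ↑(k0.1) := by rw [hcast]
    have hnk : nextIdx k0 = ((k0.1 + 1 : ℕ) : Fin L) := nextIdx_natCast k0
    rw [hxv, hxk, hck, hnk]
    have hwv : w k0.1 = |v (a ↑(k0.1+1)) (c ↑k0.1)| / |v (a ↑(k0.1+1)) (c ↑(k0.1+1))| := rfl
    rw [hwv]
    have e1 : |v (a ↑(k0.1+1)) (c ↑k0.1)| = -(v (a ↑(k0.1+1)) (c ↑k0.1)) := abs_of_neg (hv _ _)
    have e2 : |v (a ↑(k0.1+1)) (c ↑(k0.1+1))| = -(v (a ↑(k0.1+1)) (c ↑(k0.1+1))) := abs_of_neg (hv _ _)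
    rw [e1, e2]
    exact cancel_aux _ _ _ _ (hv _ _).ne
  -- the last step gives ε * Δ
  have hLcast : ((L - 1 + 1 : ℕ) : Fin L) = (0 : Fin L) := by
    rw [show L - 1 + 1 = L from by omega]
    exact Fin.natCast_self L
  have hnklast : nextIdx ((L - 1 : ℕ) : Fin L) = 0 := by
    rw [nextIdx_natCast, Fin.val_natCast, Nat.mod_eq_of_lt (by omega), hLcast]
  have hvallast : (((L - 1 : ℕ) : Fin L)).1 = L - 1 := by
    rw [Fin.val_natCast, Nat.mod_eq_of_lt (by omega)]
  have hglast : Dfun (a 0) = ε * Δ := by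
    have hh := hD_next ((L - 1 : ℕ) : Fin L)
    rw [hnklast] at hh
    rw [hh]
    have hx0 : x (0 : Fin L) = ε := by
      simp only [hx]
      norm_num [hA]
    have hxk0 : x ((L - 1 : ℕ) : Fin L) = ε * A (L - 1) := by
      simp only [hx]
      rw [hvallast]
    rw [hx0, hxk0]
    have e0 : v (a 0) (c 0) = -NN 0 := by
      simp only [hNN]
      rw [show ((0 : ℕ) : Fin L) = (0 : Fin L) from by norm_num]
      rw [abs_of_neg (hv _ _)]
      ring
    have eL : v (a 0) (c ((L - 1 : ℕ) : Fin L)) = -DD (L - 1) := by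
      rw [hDDlast, abs_of_neg (hv _ _)]
      ring
    rw [e0, eL, hΔ]
    ring
  -- weak improvement everywhere
  have hDnonneg : ∀ i, 0 ≤ Dfun i := by
    intro i
    by_cases hik : ∃ k, i = a k
    · obtain ⟨k1, rfl⟩ := hik
      obtain ⟨k0, hk0⟩ := nextIdx_surj k1
      rw [← hk0]
      rcases Nat.lt_or_ge (k0.1 + 1) L with hlt | hge
      · rw [hg0 k0 hlt]
      · have hval : k0.1 = L - 1 := by have := k0.isLt; omega
        have hk00 : k0 = ((L - 1 : ℕ) : Fin L) := by
          apply Fin.ext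
          rw [hvallast, hval]
        rw [hk00, hnklast, hglast]
        linarith [hεΔ]
    · push_neg at hik
      rw [hD_notin _ hik]
  -- contradiction with Pareto optimality
  unfold paretoOptimal at hpo
  apply hpo
  refine ⟨z', hz'feas, fun i => ?_, ⟨a 0, ?_⟩⟩
  · rw [hutil i]
    linarith [hDnonneg i]
  · rw [hutil (a 0), hglast]
    linarith [hεΔ]
end

section
/- If a feasible allocation z of divisible chores admits a simple profitable trading cycle, i.e., a cycle C = (i_1, j_1, ..., i_L, j_L, i_{L+1} = i_1) with z_{i_k, j_k} > 0 for all k and ∏_{k=1}^{L} |v_{i_k, j_k}| / |v_{i_{k+1}, j_k}| > 1, then z is not Pareto optimal. -/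
open Finset

theorem stmt1 {n m L : ℕ} (v z : Fin n → Fin m → ℝ)
    (hv : ∀ i j, v i j < 0) (hz : feasible z)
    (hL : 2 ≤ L) (a : Fin L → Fin n) (c : Fin L → Fin m)
    (ha : Function.Injective a) (hc : Function.Injective c)
    (h1 : ∀ k, 0 < z (a k) (c k))
    (hprof : 1 < ∏ k, |v (a k) (c k)| / |v (a (nextIdx k)) (c k)|) :
    ¬ paretoOptimal v z := by
  intro hPO
  classical
  have hL0 : 0 < L := by omega
  set k0 : Fin L := ⟨0, hL0⟩ with hk0def
  set α : Fin L → ℝ := fun k => -(v (a k) (c k)) with hαdef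
  set β : Fin L → ℝ := fun k => -(v (a (nextIdx k)) (c k)) with hβdef
  have hαpos : ∀ k, 0 < α k := fun k => by simp only [hαdef]; linarith [hv (a k) (c k)]
  have hβpos : ∀ k, 0 < β k := fun k => by
    simp only [hβdef]; linarith [hv (a (nextIdx k)) (c k)]
  set r : Fin L → ℝ := fun k => α k / β k with hrdef
  have hrpos : ∀ k, 0 < r k := fun k => div_pos (hαpos k) (hβpos k)
  set Q : Fin L → ℝ := fun k => ∏ l ∈ Finset.univ.filter (fun l : Fin L => k.1 ≤ l.1), r l
    with hQdef
  have hQpos : ∀ k, 0 < Q k := fun k =>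
    Finset.prod_pos (fun l _ => hrpos l)
  have hR : 1 < Q k0 := by
    have e : Q k0 = ∏ k, |v (a k) (c k)| / |v (a (nextIdx k)) (c k)| := by
      simp only [hQdef]
      rw [Finset.filter_true_of_mem (fun _ _ => Nat.zero_le _)]
      refine Finset.prod_congr rfl (fun k _ => ?_)
      rw [abs_of_neg (hv (a k) (c k)), abs_of_neg (hv (a (nextIdx k)) (c k))]
    rw [e]; exact hprof
  -- prev and nextIdx facts
  set prev : Fin L → Fin L := fun k => ⟨(k.1 + L - 1) % L, Nat.mod_lt _ hL0⟩ with hprevdef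
  have hprevnext : ∀ k, nextIdx (prev k) = k := by
    intro k
    apply Fin.ext
    show ((k.1 + L - 1) % L + 1) % L = k.1
    rw [Nat.mod_add_mod]
    have e : k.1 + L - 1 + 1 = k.1 + L := by omega
    rw [e, Nat.add_mod_right, Nat.mod_eq_of_lt k.isLt]
  have hnextinj : Function.Injective (nextIdx : Fin L → Fin L) :=
    Finite.injective_iff_surjective.mpr (fun k => ⟨prev k, hprevnext k⟩)
  have hne_next : ∀ k : Fin L, nextIdx k ≠ k := by
    intro k h
    have h' : (k.1 + 1) % L = k.1 := congrArg Fin.val h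
    by_cases hk : k.1 + 1 < L
    · rw [Nat.mod_eq_of_lt hk] at h'; omega
    · have h2 : k.1 + 1 = L := by have := k.isLt; omega
      rw [h2, Nat.mod_self] at h'; omega
  -- key product inequality
  have hkey : ∀ k, Q k ≤ r k * Q (nextIdx k) := by
    intro k
    by_cases hk : k.1 + 1 < L
    · have h1' : nextIdx k = ⟨k.1 + 1, hk⟩ := Fin.ext (Nat.mod_eq_of_lt hk)
      have h2 : Finset.univ.filter (fun l : Fin L => k.1 ≤ l.1)
          = insert k (Finset.univ.filter (fun l : Fin L => k.1 + 1 ≤ l.1)) := by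
        ext l
        simp only [Finset.mem_filter, Finset.mem_univ, true_and, Finset.mem_insert]
        constructor
        · intro h
          rcases eq_or_lt_of_le h with h | h
          · exact Or.inl (Fin.ext h.symm)
          · exact Or.inr h
        · rintro (rfl | h) <;> omega
      have h3 : k ∉ Finset.univ.filter (fun l : Fin L => k.1 + 1 ≤ l.1) := by simp
      have : Q k = r k * Q ⟨k.1 + 1, hk⟩ := by
        simp only [hQdef]
        rw [h2, Finset.prod_insert h3]
      rw [this, h1']
    · have hk1 : k.1 + 1 = L := by have := k.isLt; omega
      have hsing : Finset.univ.filter (fun l : Fin L => k.1 ≤ l.1) = {k} := by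
        ext l
        have hl := l.isLt
        simp only [Finset.mem_filter, Finset.mem_univ, true_and, Finset.mem_singleton,
          Fin.ext_iff]
        omega
      have hQk : Q k = r k := by simp only [hQdef]; rw [hsing, Finset.prod_singleton]
      have hnk : nextIdx k = k0 := by
        apply Fin.ext
        show (k.1 + 1) % L = 0
        rw [hk1, Nat.mod_self]
      rw [hQk, hnk]
      exact le_mul_of_one_le_right (hrpos k).le hR.le
  have hprev0 : Q (prev k0) = r (prev k0) := by
    have hpv : (0 + L - 1) % L = L - 1 := by
      rw [Nat.mod_eq_of_lt (by omega)]
      omega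
    have hsing : Finset.univ.filter (fun l : Fin L => (prev k0).1 ≤ l.1) = {prev k0} := by
      ext l
      have hl := l.isLt
      simp only [Finset.mem_filter, Finset.mem_univ, true_and, Finset.mem_singleton,
        Fin.ext_iff]
      have hpk : (prev k0).1 = L - 1 := hpv
      omega
    simp only [hQdef]
    rw [hsing, Finset.prod_singleton]
  -- choose ε and transfer amounts t
  have hne : (Finset.univ : Finset (Fin L)).Nonempty := ⟨k0, Finset.mem_univ _⟩
  set ε : ℝ := Finset.univ.inf' hne (fun k => z (a k) (c k) * α k / Q k) with hεdef
  have hεpos : 0 < ε := by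
    rw [hεdef, Finset.lt_inf'_iff]
    intro k _
    exact div_pos (mul_pos (h1 k) (hαpos k)) (hQpos k)
  have hεle : ∀ k, ε ≤ z (a k) (c k) * α k / Q k := fun k =>
    Finset.inf'_le _ (Finset.mem_univ k)
  set t : Fin L → ℝ := fun k => ε * Q k / α k with htdef
  have htpos : ∀ k, 0 < t k := fun k =>
    div_pos (mul_pos hεpos (hQpos k)) (hαpos k)
  have htle : ∀ k, t k ≤ z (a k) (c k) := by
    intro k
    have h2 : ε * Q k ≤ z (a k) (c k) * α k := by
      have := (le_div_iff₀ (hQpos k)).mp (hεle k)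
      linarith
    simp only [htdef]
    rw [div_le_iff₀ (hαpos k)]
    exact h2
  have htα : ∀ k, t k * α k = ε * Q k := by
    intro k
    simp only [htdef]
    rw [div_mul_cancel₀ _ (hαpos k).ne']
  have htβ : ∀ k, t k * β k = ε * Q k / r k := by
    intro k
    simp only [htdef, hrdef]
    field_simp
  -- the improved allocation
  set z' : Fin n → Fin m → ℝ := fun i j =>
    z i j + (∑ k, if i = a (nextIdx k) ∧ j = c k then t k else 0)
      - (∑ k, if i = a k ∧ j = c k then t k else 0) with hz'def
  -- feasibility
  have hfeas : feasible z' := by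
    constructor
    · intro i j
      by_cases h : ∃ k1, i = a k1 ∧ j = c k1
      · obtain ⟨k1, hik, hjk⟩ := h
        have hS2 : (∑ k, if i = a k ∧ j = c k then t k else 0) = t k1 := by
          rw [Finset.sum_eq_single k1]
          · simp [hik, hjk]
          · intro k _ hkne
            have hcond : ¬(i = a k ∧ j = c k) := by
              rintro ⟨_, h2⟩
              exact hkne (hc (h2.symm.trans hjk).symm).symm
            simp [hcond]
          · simp
        have hS1 : (∑ k, if i = a (nextIdx k) ∧ j = c k then t k else 0) = 0 := by
          apply Finset.sum_eq_zero
          intro k _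
          have hcond : ¬(i = a (nextIdx k) ∧ j = c k) := by
            rintro ⟨h1', h2⟩
            have hkk1 : k = k1 := hc (h2.symm.trans hjk)
            subst hkk1
            exact hne_next k (ha (h1'.symm.trans hik))
          simp [hcond]
        show 0 ≤ z i j + _ - _
        rw [hS1, hS2, hik, hjk]
        have := htle k1
        linarith
      · push_neg at h
        have hS2 : (∑ k, if i = a k ∧ j = c k then t k else 0) = 0 := by
          apply Finset.sum_eq_zero
          intro k _
          have hcond : ¬(i = a k ∧ j = c k) := fun ⟨h1', h2⟩ => h k h1' h2
          simp [hcond]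
        have hS1 : 0 ≤ ∑ k, if i = a (nextIdx k) ∧ j = c k then t k else 0 :=
          Finset.sum_nonneg fun k _ => by
            split_ifs
            exacts [(htpos k).le, le_rfl]
        show 0 ≤ z i j + _ - _
        rw [hS2]
        have := hz.1 i j
        linarith
    · intro j
      have e1 : ∀ w : Fin L → Fin n,
          (∑ i, ∑ k, if i = w k ∧ j = c k then t k else 0)
            = ∑ k, if j = c k then t k else 0 := by
        intro w
        rw [Finset.sum_comm]
        refine Finset.sum_congr rfl (fun k _ => ?_)
        simp only [ite_and]
        rw [Finset.sum_ite_eq']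
        simp
      show (∑ i, (z i j + _ - _)) = 1
      rw [Finset.sum_sub_distrib, Finset.sum_add_distrib, e1 (fun k => a (nextIdx k)), e1 a,
        hz.2 j]
      ring
  -- utility computation
  have e2 : ∀ (i : Fin n) (w : Fin L → Fin n),
      (∑ j, v i j * ∑ k, if i = w k ∧ j = c k then t k else 0)
        = ∑ k, if i = w k then v i (c k) * t k else 0 := by
    intro i w
    simp only [Finset.mul_sum]
    rw [Finset.sum_comm]
    refine Finset.sum_congr rfl (fun k _ => ?_)
    simp only [mul_ite, mul_zero, ite_and]
    by_cases h : i = w k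
    · simp [h, Finset.sum_ite_eq']
    · simp [h]
  have hutil : ∀ i, util v i (z' i) = util v i (z i)
      + ((∑ k, if i = a (nextIdx k) then v i (c k) * t k else 0)
        - (∑ k, if i = a k then v i (c k) * t k else 0)) := by
    intro i
    show (∑ j, v i j * (z i j + _ - _)) = _
    simp only [mul_add, mul_sub, Finset.sum_add_distrib, Finset.sum_sub_distrib]
    rw [e2 i (fun k => a (nextIdx k)), e2 i a]
    show util v i (z i) + _ - _ = _
    ring
  -- per-agent gains
  have hgain : ∀ k1 : Fin L,
      ((∑ k, if a k1 = a (nextIdx k) then v (a k1) (c k) * t k else 0)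
        - (∑ k, if a k1 = a k then v (a k1) (c k) * t k else 0))
      = ε * Q k1 - ε * Q (prev k1) / r (prev k1) := by
    intro k1
    have hA : (∑ k, if a k1 = a k then v (a k1) (c k) * t k else 0)
        = -(ε * Q k1) := by
      rw [Finset.sum_eq_single k1]
      · have : v (a k1) (c k1) = -(α k1) := by simp [hαdef]
        rw [if_pos rfl, this, ← htα k1]
        ring
      · intro k _ hkne
        have hcond : a k1 ≠ a k := fun h => hkne (ha h).symm
        simp [hcond]
      · simp
    have hB : (∑ k, if a k1 = a (nextIdx k) then v (a k1) (c k) * t k else 0)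
        = -(ε * Q (prev k1) / r (prev k1)) := by
      rw [Finset.sum_eq_single (prev k1)]
      · rw [if_pos (by rw [hprevnext k1])]
        have hv' : v (a k1) (c (prev k1)) = -(β (prev k1)) := by
          simp only [hβdef, hprevnext k1, neg_neg]
        rw [hv', ← htβ (prev k1)]
        ring
      · intro k _ hkne
        have hcond : a k1 ≠ a (nextIdx k) := by
          intro h
          apply hkne
          apply hnextinj
          rw [hprevnext k1]
          exact (ha h).symm
        simp [hcond]
      · simp
    rw [hA, hB]
    ring
  -- all agents weakly improve
  have hle : ∀ i, util v i (z i) ≤ util v i (z' i) := by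
    intro i
    rw [hutil i]
    by_cases hi : ∃ k1, i = a k1
    · obtain ⟨k1, rfl⟩ := hi
      rw [hgain k1]
      have hk := hkey (prev k1)
      rw [hprevnext k1] at hk
      have h2 : ε * Q (prev k1) ≤ ε * (r (prev k1) * Q k1) :=
        mul_le_mul_of_nonneg_left hk hεpos.le
      have h3 : ε * Q (prev k1) / r (prev k1) ≤ ε * Q k1 := by
        rw [div_le_iff₀ (hrpos (prev k1))]
        nlinarith
      linarith
    · push_neg at hi
      have hA0 : (∑ k, if i = a k then v i (c k) * t k else 0) = 0 :=
        Finset.sum_eq_zero fun k _ => by simp [hi k]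
      have hB0 : (∑ k, if i = a (nextIdx k) then v i (c k) * t k else 0) = 0 :=
        Finset.sum_eq_zero fun k _ => by simp [hi (nextIdx k)]
      rw [hA0, hB0]
      linarith
  -- agent a k0 strictly improves
  have hstrict : util v (a k0) (z (a k0)) < util v (a k0) (z' (a k0)) := by
    rw [hutil (a k0), hgain k0, hprev0]
    have h4 : ε * r (prev k0) / r (prev k0) = ε := by
      rw [mul_div_assoc, div_self (hrpos (prev k0)).ne', mul_one]
    rw [h4]
    nlinarith [hεpos, hR]
  exact hPO ⟨z', hfeas, hle, ⟨a k0, hstrict⟩⟩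
end

section
/- Second Welfare Theorem for chores: for any Pareto optimal feasible allocation z at which every agent's utility is strictly negative, there exists a budget vector b ∈ ℝ_{<0}^n and a price vector p ∈ ℝ_{<0}^m such that z is a competitive allocation for budgets b and prices p (each agent's bundle maximizes their utility among bundles whose price is at least b_i, i.e., affordable given budget b_i). -/
open Finset

/-- Limit trick: if `a + ε * t < b` for every positive `ε`, then `a ≤ b`. -/
lemma limit_le {a b t : ℝ} (h : ∀ ε : ℝ, 0 < ε → a + ε * t < b) : a ≤ b := by
  by_contra h'
  push_neg at h'
  have ht : (0:ℝ) < |t| + 1 := by positivity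
  have hε : 0 < (a - b) / (|t| + 1) := div_pos (by linarith) ht
  have h1 : (a - b) / (|t| + 1) * (|t| + 1) = a - b := div_mul_cancel₀ _ (by positivity)
  have h2 : -((a - b) / (|t| + 1) * (|t| + 1)) ≤ (a - b) / (|t| + 1) * t := by
    rw [← mul_neg]
    exact mul_le_mul_of_nonneg_left (by linarith [neg_abs_le t]) hε.le
  have h3 := h _ hε
  rw [h1] at h2
  linarith

/-- Linearity of `util` under convex combinations. -/
lemma util_comb {n m : ℕ} (v : Fin n → Fin m → ℝ) (i : Fin n) (a b : ℝ)
    (x y : Fin m → ℝ) :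
    util v i (fun j => a * x j + b * y j) = a * util v i x + b * util v i y := by
  simp only [util, Finset.mul_sum, ← Finset.sum_add_distrib]
  exact Finset.sum_congr rfl fun j _ => by ring

/-- If a feasible allocation maximizes the `μ`-weighted utility sum, then there is no chore
`j`, held in part by agent `i`, whose transfer to an agent `i'` would strictly increase the
weighted sum. -/
lemma improve {n m : ℕ} (v z : Fin n → Fin m → ℝ) (μ : Fin n → ℝ) (hz : feasible z)
    (hmax : ∀ z', feasible z' → ∑ a, μ a * util v a (z' a) ≤ ∑ a, μ a * util v a (z a))
    (i i' : Fin n) (j : Fin m) (hij : 0 < z i j) (h : μ i * v i j < μ i' * v i' j) :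
    False := by
  have hne : i ≠ i' := by rintro rfl; exact lt_irrefl _ h
  set δ := z i j with hδ
  set z' : Fin n → Fin m → ℝ := fun a b =>
    z a b + (if a = i' then 1 else 0) * (if b = j then δ else 0)
      - (if a = i then 1 else 0) * (if b = j then δ else 0) with hz'def
  have hd : ∀ a : Fin n, ∑ b, v a b * (if b = j then δ else 0) = v a j * δ := by
    intro a
    simp [mul_ite, mul_zero]
  have hutil : ∀ a, util v a (z' a) = util v a (z a)
      + (if a = i' then 1 else 0) * (v a j * δ)
      - (if a = i then 1 else 0) * (v a j * δ) := by
    intro a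
    have : util v a (z' a) = ∑ b, (v a b * z a b
        + (if a = i' then 1 else 0) * (v a b * (if b = j then δ else 0))
        - (if a = i then 1 else 0) * (v a b * (if b = j then δ else 0))) := by
      refine Finset.sum_congr rfl fun b _ => ?_
      simp only [hz'def]
      ring
    rw [this, Finset.sum_sub_distrib, Finset.sum_add_distrib,
      ← Finset.mul_sum, ← Finset.mul_sum, hd a, util]
  have hfeas : feasible z' := by
    constructor
    · intro a b
      rcases eq_or_ne a i with rfl | ha
      · rcases eq_or_ne b j with rfl | hb
        · have hzz : z' a b = z a b - δ := by simp [hz'def, hne]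
          rw [hzz, hδ]
          linarith
        · have hzz : z' a b = z a b := by simp [hz'def, hb]
          rw [hzz]
          exact hz.1 a b
      · simp only [hz'def, if_neg ha, zero_mul, sub_zero]
        have h1 := hz.1 a b
        have h2 : (0:ℝ) ≤ (if a = i' then (1:ℝ) else 0) * (if b = j then δ else 0) := by
          positivity
        linarith
    · intro b
      have : ∑ a, z' a b = ∑ a, z a b
          + (∑ a, if a = i' then (1:ℝ) else 0) * (if b = j then δ else 0)
          - (∑ a, if a = i then (1:ℝ) else 0) * (if b = j then δ else 0) := by
        simp only [hz'def]
        rw [Finset.sum_sub_distrib, Finset.sum_add_distrib, ← Finset.sum_mul, ← Finset.sum_mul]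
      rw [this]
      simp [hz.2 b]
  have hS : ∑ a, μ a * util v a (z' a)
      = (∑ a, μ a * util v a (z a)) + μ i' * (v i' j * δ) - μ i * (v i j * δ) := by
    have : ∑ a, μ a * util v a (z' a) = ∑ a, (μ a * util v a (z a)
        + (if a = i' then 1 else 0) * (μ a * (v a j * δ))
        - (if a = i then 1 else 0) * (μ a * (v a j * δ))) := by
      refine Finset.sum_congr rfl fun a _ => ?_
      rw [hutil a]
      ring
    rw [this, Finset.sum_sub_distrib, Finset.sum_add_distrib]
    congr 1
    · congr 1
      simp [ite_mul, zero_mul, one_mul]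
    · simp [ite_mul, zero_mul, one_mul]
  have hle := hmax z' hfeas
  rw [hS] at hle
  nlinarith [mul_pos (sub_pos.mpr h) hij]

/-- Pareto optimality yields nonnegative, not-all-zero welfare weights for which `z`
maximizes the weighted utilitarian welfare. -/
lemma exists_weights {n m : ℕ} (hn : 0 < n) (v z : Fin n → Fin m → ℝ)
    (hz : feasible z) (hpo : paretoOptimal v z) :
    ∃ μ : Fin n → ℝ, (∀ i, 0 ≤ μ i) ∧ (∃ i, 0 < μ i) ∧
      ∀ z', feasible z' → ∑ a, μ a * util v a (z' a) ≤ ∑ a, μ a * util v a (z a) := by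
  classical
  set uz : Fin n → ℝ := fun i => util v i (z i) with huzdef
  set U : Set (Fin n → ℝ) := {u | ∃ z', feasible z' ∧ u = fun i => util v i (z' i)} with hUdef
  set B : Set (Fin n → ℝ) := Set.univ.pi fun i => Set.Ioi (uz i) with hBdef
  have hBmem : ∀ w : Fin n → ℝ, w ∈ B ↔ ∀ i, uz i < w i := by
    intro w
    simp [hBdef, Set.mem_pi]
  have hBopen : IsOpen B := isOpen_set_pi Set.finite_univ fun i _ => isOpen_Ioi
  have hBconv : Convex ℝ B := convex_pi fun i _ => convex_Ioi _
  have hUconv : Convex ℝ U := by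
    rintro u1 ⟨z1, hz1, rfl⟩ u2 ⟨z2, hz2, rfl⟩ a b ha hb hab
    refine ⟨fun i j => a * z1 i j + b * z2 i j, ⟨?_, ?_⟩, ?_⟩
    · intro i j
      have := hz1.1 i j; have := hz2.1 i j
      positivity
    · intro j
      rw [Finset.sum_add_distrib, ← Finset.mul_sum, ← Finset.mul_sum, hz1.2 j, hz2.2 j]
      simpa using hab
    · funext i
      simp [util_comb, smul_eq_mul]
  have hdisj : Disjoint B U := by
    rw [Set.disjoint_left]
    rintro w hw ⟨z', hz', rfl⟩
    rw [hBmem] at hw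
    exact hpo ⟨z', hz', fun i => (hw i).le, ⟨0, hn⟩, hw ⟨0, hn⟩⟩
  obtain ⟨f, c, hB, hU⟩ := geometric_hahn_banach_open hBconv hBopen hUconv hdisj
  have huzU : uz ∈ U := ⟨z, hz, rfl⟩
  have hcuz : c ≤ f uz := hU uz huzU
  -- representation of f
  have hrep : ∀ x : Fin n → ℝ, f x = ∑ i, x i * f (Pi.single i 1) := by
    intro x
    have hx : x = ∑ i, x i • (Pi.single i 1 : Fin n → ℝ) := by
      funext j
      simp [Pi.single_apply, Finset.sum_apply, Finset.sum_ite_eq]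
    calc f x = f (∑ i, x i • (Pi.single i 1 : Fin n → ℝ)) := by rw [← hx]
      _ = ∑ i, x i * f (Pi.single i 1) := by
          rw [map_sum]
          exact Finset.sum_congr rfl fun i _ => by rw [map_smul]; rfl
  -- membership of perturbed points in B
  have hBpt : ∀ w : Fin n → ℝ, (∀ i, 0 ≤ w i) → ∀ ε : ℝ, 0 < ε →
      (uz + w + ε • (fun _ => (1:ℝ))) ∈ B := by
    intro w hw ε hε
    rw [hBmem]
    intro i
    have := hw i
    simp only [Pi.add_apply, Pi.smul_apply, smul_eq_mul, mul_one]
    linarith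
  -- each coefficient is nonpositive
  have hcoef : ∀ w : Fin n → ℝ, (∀ i, 0 ≤ w i) → f w ≤ 0 := by
    intro w hw
    have key : ∀ ε : ℝ, 0 < ε → f w + ε * f (fun _ => (1:ℝ)) < 0 := by
      intro ε hε
      have h1 := hB _ (hBpt w hw ε hε)
      rw [map_add, map_add, map_smul] at h1
      have : f uz + (f w + ε * f (fun _ => (1:ℝ))) < c := by
        simpa [smul_eq_mul, add_assoc] using h1
      linarith
    exact limit_le key
  -- f uz ≤ c
  have hfuzc : f uz ≤ c := by
    refine limit_le (t := f fun _ => (1:ℝ)) fun ε hε => ?_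
    have h1 := hB _ (hBpt 0 (fun _ => le_rfl) ε hε)
    rw [map_add, map_add, map_smul, map_zero] at h1
    simpa [smul_eq_mul] using h1
  set μ : Fin n → ℝ := fun i => -(f (Pi.single i 1)) with hμdef
  have hμ0 : ∀ i, 0 ≤ μ i := by
    intro i
    have : f (Pi.single i 1) ≤ 0 := hcoef _ (fun j => by
      rcases eq_or_ne j i with rfl | hj
      · simp
      · simp [Pi.single_apply, hj])
    simp [hμdef]; linarith
  have hkey : ∀ x : Fin n → ℝ, ∑ i, μ i * x i = -(f x) := by
    intro x
    rw [hrep x, ← Finset.sum_neg_distrib]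
    exact Finset.sum_congr rfl fun i _ => by simp [hμdef]; ring
  have hex : ∃ i, 0 < μ i := by
    by_contra hall
    push_neg at hall
    have hμz : ∀ i, μ i = 0 := fun i => le_antisymm (hall i) (hμ0 i)
    have hfz : ∀ x : Fin n → ℝ, f x = 0 := by
      intro x
      have := hkey x
      simp [hμz] at this
      linarith
    have hwB : (uz + (fun _ => (1:ℝ))) ∈ B := by
      rw [hBmem]; intro i; simp
    have := hB _ hwB
    rw [hfz] at this
    rw [hfz] at hcuz
    linarith
  refine ⟨μ, hμ0, hex, ?_⟩
  intro z' hz'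
  have h1 : c ≤ f (fun i => util v i (z' i)) := hU _ ⟨z', hz', rfl⟩
  have h2 : f uz ≤ f (fun i => util v i (z' i)) := le_trans hfuzc h1
  have e1 := hkey (fun i => util v i (z' i))
  have e2 := hkey uz
  simp only [huzdef] at e2
  linarith

theorem stmt5 {n m : ℕ} (v z : Fin n → Fin m → ℝ)
    (hv : ∀ i j, v i j < 0) (hz : feasible z) (hpo : paretoOptimal v z)
    (hneg : ∀ i, util v i (z i) < 0) :
    ∃ (b : Fin n → ℝ) (p : Fin m → ℝ), (∀ i, b i < 0) ∧ (∀ j, p j < 0) ∧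
      competitive v b z p := by
  rcases Nat.eq_zero_or_pos n with hn | hn
  · subst hn
    exact ⟨fun i => -1, fun _ => -1, fun i => i.elim0, fun j => by norm_num,
      hz, fun j => by norm_num, fun i => i.elim0⟩
  · haveI : Nonempty (Fin n) := ⟨⟨0, hn⟩⟩
    obtain ⟨μ, hμ0, ⟨i0, hi0⟩, hmax⟩ := exists_weights hn v z hz hpo
    -- every agent holds some chore
    have hzpos : ∀ i, ∃ j, 0 < z i j := by
      intro i
      by_contra hcon
      push_neg at hcon
      have : util v i (z i) = 0 := by
        rw [util]
        refine Finset.sum_eq_zero fun j _ => ?_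
        have : z i j = 0 := le_antisymm (hcon j) (hz.1 i j)
        simp [this]
      linarith [hneg i]
    -- all weights are positive
    have hμpos : ∀ i, 0 < μ i := by
      intro i
      rcases (hμ0 i).lt_or_eq with h | h
      · exact h
      · exfalso
        obtain ⟨j, hj⟩ := hzpos i0
        refine improve v z μ hz hmax i0 i j hj ?_
        rw [← h, zero_mul]
        exact mul_neg_of_pos_of_neg hi0 (hv i0 j)
    -- prices
    set p : Fin m → ℝ := fun j => Finset.univ.sup' Finset.univ_nonempty (fun i => μ i * v i j)
      with hpdef
    have hple : ∀ i j, μ i * v i j ≤ p j := fun i j =>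
      Finset.le_sup' (fun i => μ i * v i j) (Finset.mem_univ i)
    have hp : ∀ j, p j < 0 := by
      intro j
      obtain ⟨i, -, hi⟩ := Finset.exists_mem_eq_sup' Finset.univ_nonempty
        (fun i => μ i * v i j)
      have hpj : p j = μ i * v i j := hi
      rw [hpj]
      exact mul_neg_of_pos_of_neg (hμpos i) (hv i j)
    have heq : ∀ i j, 0 < z i j → μ i * v i j = p j := by
      intro i j hij
      refine le_antisymm (hple i j) ?_
      by_contra hlt
      push_neg at hlt
      obtain ⟨i', _, hi'⟩ := Finset.exists_mem_eq_sup' Finset.univ_nonempty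
        (fun i => μ i * v i j)
      have : μ i * v i j < μ i' * v i' j := by
        have hpj : p j = μ i' * v i' j := hi'
        rw [hpj] at hlt
        exact hlt
      exact improve v z μ hz hmax i i' j hij this
    -- budgets
    set b : Fin n → ℝ := fun i => ∑ j, p j * z i j with hbdef
    have hb : ∀ i, b i < 0 := by
      intro i
      obtain ⟨j0, hj0⟩ := hzpos i
      have : ∑ j, p j * z i j < ∑ j : Fin m, (0:ℝ) := by
        refine Finset.sum_lt_sum (fun j _ => ?_) ⟨j0, Finset.mem_univ j0, ?_⟩
        · exact mul_nonpos_iff.mpr (Or.inr ⟨(hp j).le, hz.1 i j⟩)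
        · exact mul_neg_of_neg_of_pos (hp j0) hj0
      simpa [hbdef] using this
    have hbi : ∀ i, b i = μ i * util v i (z i) := by
      intro i
      rw [hbdef, util, Finset.mul_sum]
      refine Finset.sum_congr rfl fun j _ => ?_
      rcases (hz.1 i j).lt_or_eq with h | h
      · rw [← heq i j h]; ring
      · rw [← h]; ring
    refine ⟨b, p, hb, hp, hz, hp, ?_⟩
    intro i x hx hbud
    have h1 : μ i * util v i x ≤ ∑ j, p j * x j := by
      rw [util, Finset.mul_sum]
      refine Finset.sum_le_sum fun j _ => ?_
      have := mul_le_mul_of_nonneg_right (hple i j) (hx j)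
      calc μ i * (v i j * x j) = μ i * v i j * x j := by ring
        _ ≤ p j * x j := this
    have h2 : μ i * util v i x ≤ μ i * util v i (z i) := by
      rw [← hbi i]
      exact le_trans h1 hbud
    exact le_of_mul_le_mul_left h2 (hμpos i)
end

section
/- Two-agent MWW graph structure: for n = 2 agents and chores reordered so that the ratio |v_{1,j}|/|v_{2,j}| is weakly increasing in j, every maximal weighted welfare graph G_τ (for τ ∈ ℝ_{>0}^2) is either a k/(k+1)-split (agent 1 linked exactly to chores 1,...,k and agent 2 exactly to chores k+1,...,m) for some 0 ≤ k ≤ m, or a k-cut for some 1 ≤ k ≤ m (agent 1 linked to chores with ratio strictly less than |v_{1,k}|/|v_{2,k}|, agent 2 to those with strictly greater ratio, and both agents linked to all chores with ratio equal to |v_{1,k}|/|v_{2,k}|). -/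
open Finset

theorem stmt13 {m : ℕ} (v : Fin 2 → Fin m → ℝ) (τ : Fin 2 → ℝ)
    (hv : ∀ i j, v i j < 0) (hτ : ∀ i, 0 < τ i)
    (hmono : Monotone (fun j : Fin m => |v 0 j| / |v 1 j|)) :
    (∃ k : ℕ, k ≤ m ∧ ∀ j : Fin m,
        (MWWedge v τ 0 j ↔ (j : ℕ) < k) ∧ (MWWedge v τ 1 j ↔ k ≤ (j : ℕ))) ∨
    (∃ k : Fin m, ∀ j : Fin m,
        (MWWedge v τ 0 j ↔ |v 0 j| / |v 1 j| ≤ |v 0 k| / |v 1 k|) ∧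
        (MWWedge v τ 1 j ↔ |v 0 k| / |v 1 k| ≤ |v 0 j| / |v 1 j|)) := by
  have hpos : ∀ i j, 0 < |v i j| := fun i j => abs_pos.mpr (hv i j).ne
  have h0 : ∀ j, MWWedge v τ 0 j ↔ |v 0 j| / |v 1 j| ≤ τ 1 / τ 0 := by
    intro j
    rw [div_le_div_iff₀ (hpos 1 j) (hτ 0)]
    constructor
    · intro h
      have := h 1
      linarith [mul_comm (τ 0) |v 0 j|]
    · intro h i'
      fin_cases i'
      · exact le_rfl
      · show τ 0 * |v 0 j| ≤ τ 1 * |v 1 j|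
        linarith [mul_comm (|v 0 j|) (τ 0)]
  have h1 : ∀ j, MWWedge v τ 1 j ↔ τ 1 / τ 0 ≤ |v 0 j| / |v 1 j| := by
    intro j
    rw [div_le_div_iff₀ (hτ 0) (hpos 1 j)]
    constructor
    · intro h
      have := h 0
      linarith [mul_comm (τ 0) |v 0 j|]
    · intro h i'
      fin_cases i'
      · show τ 1 * |v 1 j| ≤ τ 0 * |v 0 j|
        linarith [mul_comm (|v 0 j|) (τ 0)]
      · exact le_rfl
  by_cases hc : ∃ k : Fin m, |v 0 k| / |v 1 k| = τ 1 / τ 0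
  · obtain ⟨k, hk⟩ := hc
    right
    exact ⟨k, fun j => ⟨by rw [h0, hk], by rw [h1, hk]⟩⟩
  · push_neg at hc
    left
    set S : Finset (Fin m) := univ.filter (fun j => |v 0 j| / |v 1 j| < τ 1 / τ 0) with hS
    refine ⟨S.card, le_trans (card_filter_le _ _) (by simp), ?_⟩
    have key : ∀ j : Fin m, (|v 0 j| / |v 1 j| < τ 1 / τ 0) ↔ (j : ℕ) < S.card := by
      intro j
      constructor
      · intro hj
        have hsub : Iic j ⊆ S := by
          intro i hi
          exact mem_filter.mpr ⟨mem_univ _, lt_of_le_of_lt (hmono (mem_Iic.mp hi)) hj⟩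
        have := card_le_card hsub
        rw [Fin.card_Iic] at this
        omega
      · intro hj
        by_contra hcon
        have hjt : τ 1 / τ 0 < |v 0 j| / |v 1 j| :=
          lt_of_le_of_ne (not_lt.mp hcon) (fun h => hc j h.symm)
        have hsub : S ⊆ Iio j := by
          intro i hi
          have hi' := (mem_filter.mp hi).2
          rw [mem_Iio]
          by_contra hij
          exact absurd (lt_trans hi' hjt) (not_lt.mpr (hmono (not_lt.mp hij)))
        have := card_le_card hsub
        rw [Fin.card_Iio] at this
        omega
    intro j
    constructor
    · rw [h0, ← key j]
      constructor
      · intro h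
        exact lt_of_le_of_ne h (hc j)
      · exact le_of_lt
    · rw [h1, ← not_lt, ← not_lt, key j]
end

section
/- Uniqueness of efficient allocations for non-degenerate value matrices: if the strictly negative value matrix v is such that for every simple cycle C = (i_1, j_1, ..., i_L, j_L, i_1) in the complete bipartite graph on agents and chores the product ∏_{k=1}^L |v_{i_k,j_k}|/|v_{i_{k+1},j_k}| ≠ 1, then for every Pareto optimal feasible allocation z, the consumption graph G_z is acyclic, and any feasible allocation z' with u_i(z') = u_i(z) for all i satisfies z' = z. -/
open Finset

theorem stmt18 {n m : ℕ} (v : Fin n → Fin m → ℝ)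
    (hv : ∀ i j, v i j < 0)
    (hnd : ∀ (L : ℕ), 2 ≤ L → ∀ (a : Fin L → Fin n) (c : Fin L → Fin m),
      Function.Injective a → Function.Injective c →
      ∏ k, |v (a k) (c k)| / |v (a (nextIdx k)) (c k)| ≠ 1)
    (z : Fin n → Fin m → ℝ) (hz : feasible z) (hpo : paretoOptimal v z) :
    (¬ ∃ (L : ℕ) (_ : 2 ≤ L) (a : Fin L → Fin n) (c : Fin L → Fin m),
        Function.Injective a ∧ Function.Injective c ∧
        ∀ k, 0 < z (a k) (c k) ∧ 0 < z (a (nextIdx k)) (c k)) ∧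
    (∀ z', feasible z' → (∀ i, util v i (z' i) = util v i (z i)) → z' = z) := by 
  have po_acyclic : ∀ (z : Fin n → Fin m → ℝ), feasible z → paretoOptimal v z →
      ¬ ∃ (L : ℕ) (_ : 2 ≤ L) (a : Fin L → Fin n) (c : Fin L → Fin m),
        Function.Injective a ∧ Function.Injective c ∧
        ∀ k, 0 < z (a k) (c k) ∧ 0 < z (a (nextIdx k)) (c k) := by
    clear hz hpo z
    intro z hz hpo
    rintro ⟨L, hL, a, c, ha, hc, hcyc⟩
    have hL0 : 0 < L := by omega
    set A : ℕ → Fin n := fun t => a ⟨t % L, Nat.mod_lt _ hL0⟩ with hAdef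
    set C : ℕ → Fin m := fun t => c ⟨t % L, Nat.mod_lt _ hL0⟩ with hCdef
    have hmod1 : ∀ t : ℕ, (t % L + 1) % L = (t + 1) % L := fun t =>
      Nat.ModEq.add_right 1 (Nat.mod_modEq t L)
    have hAsucc : ∀ t, A (t + 1) = a (nextIdx ⟨t % L, Nat.mod_lt _ hL0⟩) := by
      intro t
      simp only [hAdef, nextIdx]
      congr 1
      exact Fin.ext (by simp [hmod1 t])
    have hAper : ∀ t, A (t + L) = A t := by
      intro t; simp only [hAdef]; congr 1; exact Fin.ext (by simp [Nat.add_mod_right])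
    have hCper : ∀ t, C (t + L) = C t := by
      intro t; simp only [hCdef]; congr 1; exact Fin.ext (by simp [Nat.add_mod_right])
    have hAeq : ∀ k : Fin L, a k = A k.val := by
      intro k; simp only [hAdef]; congr 1; exact Fin.ext (by simp [Nat.mod_eq_of_lt k.isLt])
    have hCeq : ∀ k : Fin L, c k = C k.val := by
      intro k; simp only [hCdef]; congr 1; exact Fin.ext (by simp [Nat.mod_eq_of_lt k.isLt])
    have hAinj : ∀ s t : ℕ, s < L → t < L → A s = A t → s = t := by
      intro s t hs ht h
      have := ha h
      have := Fin.mk.injEq .. ▸ this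
      simpa [Nat.mod_eq_of_lt hs, Nat.mod_eq_of_lt ht] using Fin.val_eq_of_eq (ha h)
    have habs : ∀ (i : Fin n) (j : Fin m), 0 < |v i j| := fun i j => abs_pos.2 (hv i j).ne
    have hz1 : ∀ t, 0 < z (A t) (C t) := fun t => (hcyc ⟨t % L, Nat.mod_lt _ hL0⟩).1
    have hz2 : ∀ t, 0 < z (A (t + 1)) (C t) := by
      intro t
      have := (hcyc ⟨t % L, Nat.mod_lt _ hL0⟩).2
      rwa [← hAsucc t] at this
    -- the weights
    set w : ℕ → ℝ := fun k => ∏ l ∈ Finset.range k,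
        (|v (A (l + 1)) (C l)| / |v (A (l + 1)) (C (l + 1))|) with hwdef
    have hwpos : ∀ k, 0 < w k := by
      intro k
      apply Finset.prod_pos
      intro l _
      exact div_pos (habs _ _) (habs _ _)
    have hw0 : w 0 = 1 := by simp [hwdef]
    have hwrec : ∀ k, w (k + 1) * |v (A (k + 1)) (C (k + 1))| = w k * |v (A (k + 1)) (C k)| := by
      intro k
      have : w (k + 1) = w k * (|v (A (k + 1)) (C k)| / |v (A (k + 1)) (C (k + 1))|) :=
        Finset.prod_range_succ _ k
      rw [this, mul_assoc, div_mul_cancel₀ _ (habs _ _).ne']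
    -- the product around the cycle is ≠ 1
    have hnx : ∀ k : Fin L, a (nextIdx k) = A (k.val + 1) := by
      intro k
      rw [hAsucc k.val]
      congr 2
      exact Fin.ext (Nat.mod_eq_of_lt k.isLt).symm
    have hP : ∏ l ∈ Finset.range L, (|v (A l) (C l)| / |v (A (l + 1)) (C l)|) ≠ 1 := by
      intro hcon
      apply hnd L hL a c ha hc
      rw [← Fin.prod_univ_eq_prod_range (fun l => |v (A l) (C l)| / |v (A (l + 1)) (C l)|) L]
        at hcon
      rw [← hcon]
      apply Finset.prod_congr rfl
      intro k _
      rw [hAeq k, hCeq k, hnx k]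
    have hAL : A L = A 0 := by simpa using hAper 0
    have hCL : C L = C 0 := by simpa using hCper 0
    have hshift : ∏ l ∈ Finset.range L, |v (A (l + 1)) (C (l + 1))|
        = ∏ l ∈ Finset.range L, |v (A l) (C l)| := by
      have h1 := Finset.prod_range_succ' (fun l => |v (A l) (C l)|) L
      have h2 := Finset.prod_range_succ (fun l => |v (A l) (C l)|) L
      rw [h2, hAL, hCL] at h1
      exact mul_right_cancel₀ (habs _ _).ne' h1.symm
    have hwL1 : w L * ∏ l ∈ Finset.range L, (|v (A l) (C l)| / |v (A (l + 1)) (C l)|) = 1 := by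
      simp only [hwdef]
      rw [← Finset.prod_mul_distrib]
      rw [Finset.prod_congr rfl (fun l (_ : l ∈ Finset.range L) =>
        show (|v (A (l + 1)) (C l)| / |v (A (l + 1)) (C (l + 1))|)
            * (|v (A l) (C l)| / |v (A (l + 1)) (C l)|)
            = |v (A l) (C l)| / |v (A (l + 1)) (C (l + 1))| by
          rw [div_mul_div_comm, mul_comm, mul_div_mul_right _ _ (habs _ _).ne'])]
      rw [Finset.prod_div_distrib, hshift, div_self]
      exact (Finset.prod_pos fun l _ => habs (A l) (C l)).ne'
    have hwL : w L ≠ 1 := by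
      intro h
      rw [h, one_mul] at hwL1
      exact hP hwL1
    have hAmod : ∀ t, A t = A (t % L) := by
      intro t; simp only [hAdef]; congr 1
      exact Fin.ext (by simp [Nat.mod_mod_of_dvd t (dvd_refl L)])
    classical
    -- the perturbation direction
    set δ : Fin n → Fin m → ℝ := fun i j => ∑ k ∈ Finset.range L,
        ((if A (k + 1) = i ∧ C k = j then w k else 0)
          - (if A k = i ∧ C k = j then w k else 0)) with hδdef
    have hδsupp : ∀ i j, δ i j ≠ 0 → 0 < z i j := by
      intro i j h
      by_contra hzij
      apply h
      simp only [hδdef]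
      apply Finset.sum_eq_zero
      intro k _
      have e1 : (if A (k + 1) = i ∧ C k = j then w k else 0) = 0 := by
        rw [if_neg]; rintro ⟨h1, h2⟩; exact hzij (by rw [← h1, ← h2]; exact hz2 k)
      have e2 : (if A k = i ∧ C k = j then w k else 0) = 0 := by
        rw [if_neg]; rintro ⟨h1, h2⟩; exact hzij (by rw [← h1, ← h2]; exact hz1 k)
      rw [e1, e2, sub_zero]
    have hδcol : ∀ j, ∑ i, δ i j = 0 := by
      intro j
      simp only [hδdef]
      rw [Finset.sum_comm]
      apply Finset.sum_eq_zero
      intro k _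
      rw [Finset.sum_sub_distrib]
      have e1 : ∑ i, (if A (k + 1) = i ∧ C k = j then w k else 0)
          = if C k = j then w k else 0 := by
        by_cases hc' : C k = j <;> simp [hc', Finset.sum_ite_eq]
      have e2 : ∑ i, (if A k = i ∧ C k = j then w k else 0)
          = if C k = j then w k else 0 := by
        by_cases hc' : C k = j <;> simp [hc', Finset.sum_ite_eq]
      rw [e1, e2, sub_self]
    -- utility effect of the perturbation
    have hsum1 : ∀ (i : Fin n) (k : ℕ) (b : Fin n),
        ∑ j, v i j * (if b = i ∧ C k = j then w k else 0)
          = (if b = i then v i (C k) * w k else 0) := by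
      intro i k b
      by_cases h' : b = i
      · simp only [h', true_and, if_true]
        rw [Finset.sum_eq_single (C k)]
        · simp
        · intro j _ hj; simp [Ne.symm hj]
        · simp
      · simp [h']
    have hg : ∀ i, ∑ j, v i j * δ i j
        = ∑ k ∈ Finset.range L, ((if A (k + 1) = i then v i (C k) * w k else 0)
          - (if A k = i then v i (C k) * w k else 0)) := by
      intro i
      simp only [hδdef]
      calc ∑ j, v i j * ∑ k ∈ Finset.range L,
            ((if A (k + 1) = i ∧ C k = j then w k else 0)
              - (if A k = i ∧ C k = j then w k else 0))
          = ∑ j, ∑ k ∈ Finset.range L,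
            (v i j * (if A (k + 1) = i ∧ C k = j then w k else 0)
              - v i j * (if A k = i ∧ C k = j then w k else 0)) := by
            apply Finset.sum_congr rfl; intro j _
            rw [Finset.mul_sum]
            apply Finset.sum_congr rfl; intro k _; ring
        _ = ∑ k ∈ Finset.range L, ∑ j,
            (v i j * (if A (k + 1) = i ∧ C k = j then w k else 0)
              - v i j * (if A k = i ∧ C k = j then w k else 0)) := Finset.sum_comm
        _ = _ := by
            apply Finset.sum_congr rfl; intro k _
            rw [Finset.sum_sub_distrib, hsum1 i k (A (k + 1)), hsum1 i k (A k)]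
    have hL1 : L - 1 + 1 = L := Nat.sub_add_cancel hL0
    -- value of the perturbation for agent A 0
    have hg0 : ∑ j, v (A 0) j * δ (A 0) j = (1 - w L) * |v (A 0) (C 0)| := by
      rw [hg, Finset.sum_sub_distrib]
      have e1 : ∑ k ∈ Finset.range L, (if A (k + 1) = A 0 then v (A 0) (C k) * w k else 0)
          = v (A 0) (C (L - 1)) * w (L - 1) := by
        rw [Finset.sum_eq_single (L - 1)]
        · rw [if_pos (by rw [hL1, hAL])]
        · intro k hk hkne
          rw [if_neg]
          intro hcon
          rw [hAmod (k + 1)] at hcon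
          have := hAinj _ _ (Nat.mod_lt _ hL0) hL0 hcon
          have hkL : k + 1 ≤ L := Finset.mem_range.1 hk
          rcases Nat.lt_or_ge (k + 1) L with h' | h'
          · rw [Nat.mod_eq_of_lt h'] at this; omega
          · have : k + 1 = L := by omega
            omega
        · intro h; exact absurd (Finset.mem_range.2 (by omega)) h
      have e2 : ∑ k ∈ Finset.range L, (if A k = A 0 then v (A 0) (C k) * w k else 0)
          = v (A 0) (C 0) * w 0 := by
        rw [Finset.sum_eq_single 0]
        · simp
        · intro k hk hkne
          rw [if_neg]
          intro hcon
          exact hkne (hAinj _ _ (Finset.mem_range.1 hk) hL0 hcon)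
        · intro h; exact absurd (Finset.mem_range.2 (by omega)) h
      rw [e1, e2, hw0, mul_one]
      have hrecL : w L * |v (A 0) (C 0)| = w (L - 1) * |v (A 0) (C (L - 1))| := by
        have := hwrec (L - 1)
        rw [hL1, hAL, hCL] at this
        exact this
      rw [abs_of_neg (hv (A 0) (C 0))] at hrecL ⊢
      rw [abs_of_neg (hv (A 0) (C (L - 1)))] at hrecL
      linear_combination hrecL
    -- the perturbation doesn't change other agents' utilities
    have hgne : ∀ i, i ≠ A 0 → ∑ j, v i j * δ i j = 0 := by
      intro i hi
      rw [hg]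
      by_cases hex : ∃ q, q < L ∧ A q = i
      · obtain ⟨q, hqL, hqi⟩ := hex
        have hq0 : q ≠ 0 := by rintro rfl; exact hi hqi.symm
        rw [Finset.sum_sub_distrib]
        have e1 : ∑ k ∈ Finset.range L, (if A (k + 1) = i then v i (C k) * w k else 0)
            = v i (C (q - 1)) * w (q - 1) := by
          rw [Finset.sum_eq_single (q - 1)]
          · rw [if_pos (by rw [Nat.sub_add_cancel (by omega : 1 ≤ q)]; exact hqi)]
          · intro k hk hkne
            rw [if_neg]
            intro hcon
            rw [← hqi] at hcon
            rw [hAmod (k + 1)] at hcon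
            have := hAinj _ _ (Nat.mod_lt _ hL0) hqL hcon
            have hkL : k + 1 ≤ L := Finset.mem_range.1 hk
            rcases Nat.lt_or_ge (k + 1) L with h' | h'
            · rw [Nat.mod_eq_of_lt h'] at this; omega
            · have hkk : k + 1 = L := by omega
              rw [hkk, Nat.mod_self] at this; omega
          · intro h; exact absurd (Finset.mem_range.2 (by omega)) h
        have e2 : ∑ k ∈ Finset.range L, (if A k = i then v i (C k) * w k else 0)
            = v i (C q) * w q := by
          rw [Finset.sum_eq_single q]
          · rw [if_pos hqi]
          · intro k hk hkne
            rw [if_neg]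
            intro hcon
            rw [← hqi] at hcon
            exact hkne (hAinj _ _ (Finset.mem_range.1 hk) hqL hcon)
          · intro h; exact absurd (Finset.mem_range.2 hqL) h
        rw [e1, e2]
        have hrecq : w q * |v (A q) (C q)| = w (q - 1) * |v (A q) (C (q - 1))| := by
          have := hwrec (q - 1)
          rw [Nat.sub_add_cancel (by omega : 1 ≤ q)] at this
          exact this
        rw [← hqi]
        rw [abs_of_neg (hv (A q) (C q)), abs_of_neg (hv (A q) (C (q - 1)))] at hrecq
        linear_combination hrecq
      · push_neg at hex
        apply Finset.sum_eq_zero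
        intro k hk
        have e1 : (A (k + 1) = i) = False := by
          simp only [eq_iff_iff, iff_false]
          intro hcon
          rw [hAmod (k + 1)] at hcon
          exact hex _ (Nat.mod_lt _ hL0) hcon
        have e2 : (A k = i) = False := by
          simp only [eq_iff_iff, iff_false]
          intro hcon
          exact hex _ (Finset.mem_range.1 hk) hcon
        simp only [e1, e2, if_false, sub_self]
    -- choose the step size
    have hεex : ∃ ε : ℝ, 0 < ε ∧ ∀ i j, δ i j ≠ 0 → ε * |δ i j| ≤ z i j := by
      set S : Finset (Fin n × Fin m) := Finset.univ.filter (fun p => δ p.1 p.2 ≠ 0) with hS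
      by_cases hSne : S.Nonempty
      · refine ⟨S.inf' hSne (fun p => z p.1 p.2 / |δ p.1 p.2|), ?_, ?_⟩
        · rw [Finset.lt_inf'_iff]
          intro p hp
          have hne : δ p.1 p.2 ≠ 0 := (Finset.mem_filter.1 hp).2
          exact div_pos (hδsupp _ _ hne) (abs_pos.2 hne)
        · intro i j hne
          have hmem : (i, j) ∈ S := Finset.mem_filter.2 ⟨Finset.mem_univ _, hne⟩
          have hle := Finset.inf'_le (fun p : Fin n × Fin m => z p.1 p.2 / |δ p.1 p.2|) hmem
          exact (le_div_iff₀ (abs_pos.2 hne)).1 hle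
      · exact ⟨1, one_pos, fun i j hne =>
          absurd ⟨(i, j), Finset.mem_filter.2 ⟨Finset.mem_univ (i, j), hne⟩⟩ hSne⟩
    obtain ⟨ε, hε, hεb⟩ := hεex
    set t : ℝ := if w L < 1 then ε else -ε with htdef
    have ht_abs : |t| = ε := by
      by_cases h : w L < 1
      · simp only [htdef, if_pos h]; exact abs_of_pos hε
      · simp only [htdef, if_neg h]; rw [abs_neg]; exact abs_of_pos hε
    have htD : 0 < t * ((1 - w L) * |v (A 0) (C 0)|) := by
      rcases lt_trichotomy (w L) 1 with h | h | h
      · rw [htdef, if_pos h]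
        have h1 : (0:ℝ) < 1 - w L := by linarith
        exact mul_pos hε (mul_pos h1 (habs _ _))
      · exact absurd h hwL
      · rw [htdef, if_neg (by linarith)]
        have h1 : 1 - w L < 0 := by linarith
        have := mul_pos hε (mul_pos (by linarith : (0:ℝ) < w L - 1) (habs (A 0) (C 0)))
        nlinarith
    -- the improved allocation
    apply hpo
    refine ⟨fun i j => z i j + t * δ i j, ⟨?_, ?_⟩, ?_, ?_⟩
    · intro i j
      show 0 ≤ z i j + t * δ i j
      by_cases h : δ i j = 0
      · rw [h, mul_zero, add_zero]; exact hz.1 i j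
      · have h1 := hεb i j h
        have h2 : -(ε * |δ i j|) ≤ t * δ i j := by
          have h3 : -|t * δ i j| ≤ t * δ i j := neg_abs_le _
          rwa [abs_mul, ht_abs] at h3
        linarith
    · intro j
      show ∑ i, (z i j + t * δ i j) = 1
      rw [Finset.sum_add_distrib, hz.2 j, ← Finset.mul_sum, hδcol j, mul_zero, add_zero]
    · intro i
      show util v i (z i) ≤ util v i (fun j => z i j + t * δ i j)
      have hutil : util v i (fun j => z i j + t * δ i j)
          = util v i (z i) + t * ∑ j, v i j * δ i j := by
        simp only [util]
        rw [Finset.mul_sum, ← Finset.sum_add_distrib]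
        exact Finset.sum_congr rfl (fun j _ => by ring)
      rw [hutil]
      by_cases h : i = A 0
      · subst h; rw [hg0]; linarith
      · rw [hgne i h, mul_zero, add_zero]
    · refine ⟨A 0, ?_⟩
      show util v (A 0) (z (A 0)) < util v (A 0) (fun j => z (A 0) j + t * δ (A 0) j)
      have hutil : util v (A 0) (fun j => z (A 0) j + t * δ (A 0) j)
          = util v (A 0) (z (A 0)) + t * ∑ j, v (A 0) j * δ (A 0) j := by
        simp only [util]
        rw [Finset.mul_sum, ← Finset.sum_add_distrib]
        exact Finset.sum_congr rfl (fun j _ => by ring)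
      rw [hutil, hg0]
      linarith
  have cycle_exists : ∀ (d : Fin n → Fin m → ℝ),
      (∀ i j, d i j ≠ 0 → ∃ j', j' ≠ j ∧ d i j' ≠ 0) →
      (∀ i j, d i j ≠ 0 → ∃ i', i' ≠ i ∧ d i' j ≠ 0) →
      (∃ i j, d i j ≠ 0) →
      ∃ (L : ℕ) (_ : 2 ≤ L) (a : Fin L → Fin n) (c : Fin L → Fin m),
        Function.Injective a ∧ Function.Injective c ∧
        ∀ k, d (a k) (c k) ≠ 0 ∧ d (a (nextIdx k)) (c k) ≠ 0 := by
    intro d h1 h2 hne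
    classical
    obtain ⟨i0, j0, h0⟩ := hne
    set step : Fin n × Fin m → Fin n × Fin m := fun p =>
      if h : d p.1 p.2 ≠ 0 then
        ⟨Classical.choose (h2 p.1 p.2 h),
          Classical.choose (h1 (Classical.choose (h2 p.1 p.2 h)) p.2
            (Classical.choose_spec (h2 p.1 p.2 h)).2)⟩
      else p with hstepdef
    have hstep : ∀ p, d p.1 p.2 ≠ 0 →
        (step p).1 ≠ p.1 ∧ d (step p).1 p.2 ≠ 0 ∧ (step p).2 ≠ p.2
          ∧ d (step p).1 (step p).2 ≠ 0 := by
      intro p h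
      simp only [hstepdef, dif_pos h]
      obtain ⟨hi1, hi2⟩ := Classical.choose_spec (h2 p.1 p.2 h)
      obtain ⟨hj1, hj2⟩ := Classical.choose_spec (h1 _ p.2 hi2)
      exact ⟨hi1, hi2, hj1, hj2⟩
    set W : ℕ → Fin n × Fin m := fun t => step^[t] (i0, j0) with hWdef
    have hWs : ∀ t, W (t + 1) = step (W t) := fun t => Function.iterate_succ_apply' step t _
    have hI : ∀ t, d (W t).1 (W t).2 ≠ 0 := by
      intro t
      induction t with
      | zero => exact h0
      | succ t ih => rw [hWs]; exact (hstep _ ih).2.2.2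
    have hA : ∀ t, (W (t + 1)).1 ≠ (W t).1 := fun t => by rw [hWs]; exact (hstep _ (hI t)).1
    have hC : ∀ t, (W (t + 1)).2 ≠ (W t).2 := fun t => by rw [hWs]; exact (hstep _ (hI t)).2.2.1
    have hE : ∀ t, d (W (t + 1)).1 (W t).2 ≠ 0 := fun t => by rw [hWs]; exact (hstep _ (hI t)).2.1
    set vtx : ℕ → Fin n ⊕ Fin m := fun t =>
      if Even t then Sum.inl (W (t / 2)).1 else Sum.inr (W (t / 2)).2 with hvdef
    have hv_even : ∀ u, vtx (2 * u) = Sum.inl (W u).1 := by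
      intro u
      simp only [hvdef]
      rw [if_pos ⟨u, by omega⟩, show 2 * u / 2 = u by omega]
    have hv_odd : ∀ u, vtx (2 * u + 1) = Sum.inr (W u).2 := by
      intro u
      simp only [hvdef]
      rw [if_neg (by rintro ⟨r, hr⟩; omega), show (2 * u + 1) / 2 = u by omega]
    have hnb : ∀ t, vtx (t + 2) ≠ vtx t := by
      intro t
      rcases Nat.even_or_odd t with ⟨u, hu⟩ | ⟨u, hu⟩
      · rw [show t = 2 * u by omega, show 2 * u + 2 = 2 * (u + 1) by omega, hv_even, hv_even]
        intro h
        exact hA u (Sum.inl.inj h)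
      · rw [show t = 2 * u + 1 by omega, show 2 * u + 1 + 2 = 2 * (u + 1) + 1 by omega,
          hv_odd, hv_odd]
        intro h
        exact hC u (Sum.inr.inj h)
    have hPex : ∃ T, ∃ s, s < T ∧ vtx s = vtx T := by
      obtain ⟨x, y, hxy, heq⟩ := Finite.exists_ne_map_eq_of_infinite vtx
      rcases lt_or_gt_of_ne hxy with h | h
      · exact ⟨y, x, h, heq⟩
      · exact ⟨x, y, h, heq.symm⟩
    set T := Nat.find hPex with hTdef
    obtain ⟨s, hsT, hveq⟩ := Nat.find_spec hPex
    rw [← hTdef] at hsT hveq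
    have hmin : ∀ q, q < T → ∀ p, p < q → vtx p ≠ vtx q := by
      intro q hq p hpq heq
      exact Nat.find_min hPex hq ⟨p, hpq, heq⟩
    have hinj : ∀ p q, p < T → q < T → vtx p = vtx q → p = q := by
      intro p q hp hq heq
      rcases lt_trichotomy p q with h | h | h
      · exact absurd heq (hmin q hq p h)
      · exact h
      · exact absurd heq.symm (hmin p hp q h)
    have hpar : s % 2 = T % 2 := by
      by_contra hp
      rcases Nat.even_or_odd s with ⟨u, hu⟩ | ⟨u, hu⟩ <;>
        rcases Nat.even_or_odd T with ⟨u', hu'⟩ | ⟨u', hu'⟩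
      · omega
      · rw [show s = 2 * u by omega, show T = 2 * u' + 1 by omega, hv_even, hv_odd] at hveq
        exact absurd hveq (by simp)
      · rw [show s = 2 * u + 1 by omega, show T = 2 * u' by omega, hv_odd, hv_even] at hveq
        exact absurd hveq (by simp)
      · omega
    have hTs2 : T ≠ s + 2 := by
      intro h
      rw [h] at hveq
      exact hnb s hveq.symm
    set L := (T - s) / 2 with hLdef
    have hL2 : 2 ≤ L := by omega
    have hT : T = s + 2 * L := by omega
    have hnxinj : Function.Injective (nextIdx : Fin L → Fin L) := by
      intro k k' h
      have h' : (k.val + 1) % L = (k'.val + 1) % L := congrArg Fin.val h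
      have hk := k.isLt
      have hk' := k'.isLt
      apply Fin.ext
      rcases Nat.lt_or_ge (k.val + 1) L with hc1 | hc1 <;>
        rcases Nat.lt_or_ge (k'.val + 1) L with hc2 | hc2
      · rw [Nat.mod_eq_of_lt hc1, Nat.mod_eq_of_lt hc2] at h'; omega
      · rw [Nat.mod_eq_of_lt hc1, show k'.val + 1 = L by omega, Nat.mod_self] at h'; omega
      · rw [Nat.mod_eq_of_lt hc2, show k.val + 1 = L by omega, Nat.mod_self] at h'; omega
      · omega
    rcases Nat.even_or_odd s with ⟨σ, hσ⟩ | ⟨σ, hσ⟩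
    · -- even case : s = 2σ
      have hσ' : s = 2 * σ := by omega
      have hWT : (W (σ + L)).1 = (W σ).1 := by
        have e : vtx (2 * σ) = vtx (2 * (σ + L)) := by
          rw [← hσ', ← show s + 2 * L = 2 * (σ + L) by omega, ← hT]
          exact hveq
        rw [hv_even, hv_even] at e
        exact (Sum.inl.inj e).symm
      refine ⟨L, hL2, fun k => (W (σ + k.val)).1, fun k => (W (σ + k.val)).2, ?_, ?_, ?_⟩
      · intro k k' hkk
        have hk := k.isLt
        have hk' := k'.isLt
        have e1 : vtx (2 * (σ + k.val)) = vtx (2 * (σ + k'.val)) := by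
          rw [hv_even, hv_even]
          exact congrArg Sum.inl hkk
        have := hinj _ _ (by omega) (by omega) e1
        exact Fin.ext (by omega)
      · intro k k' hkk
        have hk := k.isLt
        have hk' := k'.isLt
        have e1 : vtx (2 * (σ + k.val) + 1) = vtx (2 * (σ + k'.val) + 1) := by
          rw [hv_odd, hv_odd]
          exact congrArg Sum.inr hkk
        have := hinj _ _ (by omega) (by omega) e1
        exact Fin.ext (by omega)
      · intro k
        have hk := k.isLt
        refine ⟨hI (σ + k.val), ?_⟩
        show d (W (σ + (k.val + 1) % L)).1 (W (σ + k.val)).2 ≠ 0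
        rcases Nat.lt_or_ge (k.val + 1) L with h | h
        · rw [Nat.mod_eq_of_lt h]
          have := hE (σ + k.val)
          rwa [show σ + k.val + 1 = σ + (k.val + 1) by omega] at this
        · rw [show k.val + 1 = L by omega, Nat.mod_self]
          rw [show σ + 0 = σ by omega, ← hWT]
          have := hE (σ + k.val)
          rwa [show σ + k.val + 1 = σ + L by omega] at this
    · -- odd case : s = 2σ + 1
      have hσ' : s = 2 * σ + 1 := by omega
      have hWT : (W (σ + L)).2 = (W σ).2 := by
        have e : vtx (2 * σ + 1) = vtx (2 * (σ + L) + 1) := by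
          rw [← hσ', ← show s + 2 * L = 2 * (σ + L) + 1 by omega, ← hT]
          exact hveq
        rw [hv_odd, hv_odd] at e
        exact (Sum.inr.inj e).symm
      refine ⟨L, hL2, fun k => (W (σ + k.val + 1)).1,
        (fun k => (W (σ + k.val)).2) ∘ nextIdx, ?_, ?_, ?_⟩
      · intro k k' hkk
        have hk := k.isLt
        have hk' := k'.isLt
        have e1 : vtx (2 * (σ + k.val + 1)) = vtx (2 * (σ + k'.val + 1)) := by
          rw [hv_even, hv_even]
          exact congrArg Sum.inl hkk
        have := hinj _ _ (by omega) (by omega) e1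
        exact Fin.ext (by omega)
      · apply Function.Injective.comp _ hnxinj
        intro k k' hkk
        have hk := k.isLt
        have hk' := k'.isLt
        have e1 : vtx (2 * (σ + k.val) + 1) = vtx (2 * (σ + k'.val) + 1) := by
          rw [hv_odd, hv_odd]
          exact congrArg Sum.inr hkk
        have := hinj _ _ (by omega) (by omega) e1
        exact Fin.ext (by omega)
      · intro k
        have hk := k.isLt
        constructor
        · show d (W (σ + k.val + 1)).1 (W (σ + (k.val + 1) % L)).2 ≠ 0
          rcases Nat.lt_or_ge (k.val + 1) L with h | h
          · rw [Nat.mod_eq_of_lt h]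
            have := hI (σ + k.val + 1)
            rwa [show σ + k.val + 1 = σ + (k.val + 1) by omega] at this
          · rw [show k.val + 1 = L by omega, Nat.mod_self, show σ + 0 = σ by omega, ← hWT,
              show σ + L = σ + k.val + 1 by omega]
            exact hI _
        · show d (W (σ + (k.val + 1) % L + 1)).1 (W (σ + (k.val + 1) % L)).2 ≠ 0
          exact hE (σ + (k.val + 1) % L)
  constructor
  · exact po_acyclic z hz hpo
  · intro z' hz' hu
    by_contra hneq
    set d : Fin n → Fin m → ℝ := fun i j => z' i j - z i j with hddef
    have hdne : ∃ i j, d i j ≠ 0 := by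
      by_contra h
      push_neg at h
      apply hneq
      funext i j
      have := h i j
      simp only [hddef] at this
      linarith [sub_eq_zero.1 this]
    have hrow : ∀ i, ∑ j, v i j * d i j = 0 := by
      intro i
      have h' : ∑ j, v i j * d i j = ∑ j, (v i j * z' i j - v i j * z i j) :=
        Finset.sum_congr rfl (fun j _ => by simp only [hddef]; ring)
      rw [h', Finset.sum_sub_distrib]
      have := hu i
      simp only [util] at this
      linarith
    have hcol : ∀ j, ∑ i, d i j = 0 := by
      intro j
      have h' : ∑ i, d i j = ∑ i, z' i j - ∑ i, z i j := by
        rw [← Finset.sum_sub_distrib]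
      rw [h', hz'.2 j, hz.2 j, sub_self]
    have h1 : ∀ i j, d i j ≠ 0 → ∃ j', j' ≠ j ∧ d i j' ≠ 0 := by
      intro i j hd
      by_contra h
      push_neg at h
      have : ∑ j', v i j' * d i j' = v i j * d i j := by
        rw [Finset.sum_eq_single j]
        · intro b _ hb; rw [h b hb, mul_zero]
        · intro hj; exact absurd (Finset.mem_univ j) hj
      rw [hrow i] at this
      exact mul_ne_zero (hv i j).ne hd this.symm
    have h2 : ∀ i j, d i j ≠ 0 → ∃ i', i' ≠ i ∧ d i' j ≠ 0 := by
      intro i j hd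
      by_contra h
      push_neg at h
      have : ∑ i', d i' j = d i j := by
        rw [Finset.sum_eq_single i]
        · intro b _ hb; exact h b hb
        · intro hi; exact absurd (Finset.mem_univ i) hi
      rw [hcol j] at this
      exact hd this.symm
    obtain ⟨L, hL, a, c, hia, hic, hcyc⟩ := cycle_exists d h1 h2 hdne
    have hpos : ∀ i j, d i j ≠ 0 → 0 < (z i j + z' i j) / 2 := by
      intro i j hd
      have hz1 := hz.1 i j
      have hz2 := hz'.1 i j
      rcases lt_or_eq_of_le hz1 with h | h
      · linarith
      rcases lt_or_eq_of_le hz2 with h' | h'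
      · linarith
      exfalso
      apply hd
      simp only [hddef]
      rw [← h, ← h']
      norm_num
    set y : Fin n → Fin m → ℝ := fun i j => (z i j + z' i j) / 2 with hydef
    have hyf : feasible y := by
      constructor
      · intro i j
        have h1' := hz.1 i j
        have h2' := hz'.1 i j
        show 0 ≤ (z i j + z' i j) / 2
        linarith
      · intro j
        show ∑ i, (z i j + z' i j) / 2 = 1
        rw [← Finset.sum_div, Finset.sum_add_distrib, hz.2 j, hz'.2 j]
        norm_num
    have hyu : ∀ i, util v i (y i) = util v i (z i) := by
      intro i
      have hui := hu i
      simp only [util, hydef] at hui ⊢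
      rw [show ∑ j, v i j * ((z i j + z' i j) / 2)
          = (∑ j, v i j * z i j + ∑ j, v i j * z' i j) / 2 by
        rw [← Finset.sum_add_distrib, Finset.sum_div]
        exact Finset.sum_congr rfl fun j _ => by ring]
      linarith
    have hypo : paretoOptimal v y := by
      rintro ⟨z'', hf, hle, i, hlt⟩
      refine hpo ⟨z'', hf, fun i' => ?_, i, ?_⟩
      · rw [← hyu i']; exact hle i'
      · rw [← hyu i]; exact hlt
    exact po_acyclic y hyf hypo ⟨L, hL, a, c, hia, hic, fun k =>
      ⟨hpos _ _ (hcyc k).1, hpos _ _ (hcyc k).2⟩⟩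
end

section
/- Max-flow characterization of competitive utility profiles: let u ∈ ℝ_{<0}^n, b ∈ ℝ_{<0}^n, v ∈ ℝ_{<0}^{n×m}, set τ_i = b_i/u_i, and q_j = min_i |b_i v_{i,j} / u_i|. Suppose ∑_i |b_i| = ∑_j q_j and there exists a nonnegative matrix F ∈ ℝ_{≥0}^{n×m} such that F_{i,j} > 0 only when τ_i |v_{i,j}| = min_{i'} τ_{i'} |v_{i',j}|, ∑_j F_{i,j} = |b_i| for all i, and ∑_i F_{i,j} = q_j for all j. Then the allocation z defined by z_{i,j} = F_{i,j}/q_j is a feasible competitive allocation with u_i(z_i) = u_i for all i, with price vector p given by p_j = -q_j. -/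
open Finset

theorem stmt19 {n m : ℕ} (v : Fin n → Fin m → ℝ) (u b : Fin n → ℝ)
    (q : Fin m → ℝ) (F : Fin n → Fin m → ℝ)
    (hv : ∀ i j, v i j < 0) (hu : ∀ i, u i < 0) (hb : ∀ i, b i < 0)
    (hq : ∀ j, IsLeast {x : ℝ | ∃ i, x = |b i * v i j / u i|} (q j))
    (hsum : ∑ i, |b i| = ∑ j, q j)
    (hF0 : ∀ i j, 0 ≤ F i j)
    (hFsupp : ∀ i j, 0 < F i j →
      ∀ i', (b i / u i) * |v i j| ≤ (b i' / u i') * |v i' j|)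
    (hFrow : ∀ i, ∑ j, F i j = |b i|)
    (hFcol : ∀ j, ∑ i, F i j = q j) :
    feasible (fun i j => F i j / q j) ∧
    (∀ i, util v i (fun j => F i j / q j) = u i) ∧
    competitive v b (fun i j => F i j / q j) (fun j => -q j) := by
  have hτ : ∀ i, 0 < b i / u i := fun i => div_pos_iff.mpr (Or.inr ⟨hb i, hu i⟩)
  have habs : ∀ i j, |b i * v i j / u i| = (b i / u i) * |v i j| := by
    intro i j
    have h1 : b i * v i j / u i < 0 :=
      div_neg_of_pos_of_neg (mul_pos_of_neg_of_neg (hb i) (hv i j)) (hu i)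
    rw [abs_of_neg h1, abs_of_neg (hv i j)]; ring
  have hqle : ∀ i j, q j ≤ (b i / u i) * |v i j| := by
    intro i j
    have h := (hq j).2 (⟨i, rfl⟩ : |b i * v i j / u i| ∈ {x : ℝ | ∃ i, x = |b i * v i j / u i|})
    rwa [habs] at h
  have hqpos : ∀ j, 0 < q j := by
    intro j
    obtain ⟨i0, hi0⟩ := (hq j).1
    rw [hi0, habs]
    exact mul_pos (hτ i0) (abs_pos.mpr (hv i0 j).ne)
  have hsup : ∀ i j, 0 < F i j → (b i / u i) * |v i j| = q j := by
    intro i j hFij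
    obtain ⟨i0, hi0⟩ := (hq j).1
    exact le_antisymm (by rw [hi0, habs]; exact hFsupp i j hFij i0) (hqle i j)
  have hveq : ∀ i j, 0 < F i j → v i j = -(q j) * (u i / b i) := by
    intro i j hFij
    have h := hsup i j hFij
    rw [abs_of_neg (hv i j)] at h
    have hbne : b i ≠ 0 := (hb i).ne
    have hune : u i ≠ 0 := (hu i).ne
    field_simp at h ⊢
    nlinarith [h]
  have hutil : ∀ i, util v i (fun j => F i j / q j) = u i := by
    intro i
    have hbne : b i ≠ 0 := (hb i).ne
    have hune : u i ≠ 0 := (hu i).ne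
    have hterm : ∀ j, v i j * (F i j / q j) = -(u i / b i) * F i j := by
      intro j
      rcases eq_or_lt_of_le (hF0 i j) with h | h
      · simp [← h]
      · rw [hveq i j h]
        have hqne : q j ≠ 0 := (hqpos j).ne'
        field_simp
    unfold util
    rw [Finset.sum_congr rfl (fun j _ => hterm j), ← Finset.mul_sum, hFrow,
      abs_of_neg (hb i)]
    field_simp
  have hfeas : feasible (fun i j => F i j / q j) := by
    constructor
    · exact fun i j => div_nonneg (hF0 i j) (hqpos j).le
    · intro j
      rw [← Finset.sum_div, hFcol, div_self (hqpos j).ne']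
  refine ⟨hfeas, hutil, hfeas, fun j => neg_neg_iff_pos.mpr (hqpos j), ?_⟩
  intro i x hx hbud
  have hτi := hτ i
  have step1 : util v i x ≤ ∑ j, (-(q j)) * x j / (b i / u i) := by
    apply Finset.sum_le_sum
    intro j _
    have h1 := hqle i j
    rw [abs_of_neg (hv i j)] at h1
    have h2 : v i j ≤ -(q j) / (b i / u i) := by
      rw [le_div_iff₀ hτi]
      nlinarith [h1]
    calc v i j * x j ≤ (-(q j) / (b i / u i)) * x j :=
          mul_le_mul_of_nonneg_right h2 (hx j)
      _ = -(q j) * x j / (b i / u i) := by ring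
  have step2 : ∑ j, (-(q j)) * x j / (b i / u i) ≤ u i := by
    rw [← Finset.sum_div, div_le_iff₀ hτi]
    have he : u i * (b i / u i) = b i := by
      rw [mul_comm]; exact div_mul_cancel₀ (b i) (hu i).ne
    rw [he]
    simpa using hbud
  rw [hutil i]
  exact le_trans step1 step2
end
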